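/- arXiv:1509.02877 — 4 statements merged into one kernel-verified Lean document; each statement's English description precedes it below -/
import Mathlib

section
/- Let A, F₁, …, F_m ∈ ℝ^{n×n}, B ∈ ℝ^{n×m}, and suppose W is a symmetric positive semidefinite matrix satisfying the generalized Lyapunov equation A W Aᵀ − W + Σ_{j=1}^m F_j W F_jᵀ + B Bᵀ = 0. Then for every vector v in the kernel of W one has Aᵀ v ∈ Ker(W), F_jᵀ v ∈ Ker(W) for all j, and Bᵀ v = 0. -/
open Matrix

/-!
Take the quadratic form of the Lyapunov equation at `v ∈ Ker W`: since `v ⬝ W v = 0`, the sum of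
the nonnegative numbers `(Aᵀv) ⬝ W (Aᵀv)`, `(F_jᵀv) ⬝ W (F_jᵀv)` and `‖Bᵀv‖²` vanishes, so
each term does. For a positive semidefinite `W`, `x ⬝ W x = 0` forces `W x = 0`.
-/

namespace Matrix

variable {ι κ : Type*} [Fintype ι] [Fintype κ]

theorem dotProduct_mulVec_mul_mul_transpose {R : Type*} [CommSemiring R]
    (M : Matrix ι κ R) (N : Matrix κ κ R) (v : ι → R) :
    v ⬝ᵥ (M * N * Mᵀ) *ᵥ v = (Mᵀ *ᵥ v) ⬝ᵥ N *ᵥ (Mᵀ *ᵥ v) := by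
  rw [← mulVec_mulVec, ← mulVec_mulVec, dotProduct_mulVec, mulVec_transpose]

variable {W : Matrix κ κ ℝ}

theorem PosSemidef.dotProduct_mulVec_mul_mul_transpose_nonneg (hW : W.PosSemidef)
    (M : Matrix ι κ ℝ) (v : ι → ℝ) : 0 ≤ v ⬝ᵥ (M * W * Mᵀ) *ᵥ v := by
  rw [dotProduct_mulVec_mul_mul_transpose]
  exact hW.dotProduct_mulVec_nonneg _

theorem PosSemidef.dotProduct_mulVec_mul_mul_transpose_eq_zero_iff (hW : W.PosSemidef)
    (M : Matrix ι κ ℝ) (v : ι → ℝ) :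
    v ⬝ᵥ (M * W * Mᵀ) *ᵥ v = 0 ↔ W *ᵥ (Mᵀ *ᵥ v) = 0 := by
  rw [dotProduct_mulVec_mul_mul_transpose]
  simpa using hW.dotProduct_mulVec_zero_iff (Mᵀ *ᵥ v)

end Matrix

/-- If the symmetric PSD matrix `W` solves the generalized Lyapunov equation
`A W Aᵀ − W + Σ_j F_j W F_jᵀ + B Bᵀ = 0`, then the kernel of `W` is invariant under
`Aᵀ` and each `F_jᵀ`, and is annihilated by `Bᵀ`. -/
theorem stmt_1 {n m : ℕ}
    (A : Matrix (Fin n) (Fin n) ℝ) (F : Fin m → Matrix (Fin n) (Fin n) ℝ)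
    (B : Matrix (Fin n) (Fin m) ℝ) (W : Matrix (Fin n) (Fin n) ℝ)
    (hW : W.PosSemidef)
    (hLyap : A * W * Aᵀ - W + (∑ j, F j * W * (F j)ᵀ) + B * Bᵀ = 0)
    (v : Fin n → ℝ) (hv : W.mulVec v = 0) :
    W.mulVec (Aᵀ.mulVec v) = 0 ∧ (∀ j, W.mulVec ((F j)ᵀ.mulVec v) = 0) ∧
      Bᵀ.mulVec v = 0 := by
  set q : Matrix (Fin n) (Fin n) ℝ → ℝ := fun M => v ⬝ᵥ M *ᵥ v
  -- writing `B Bᵀ = B 1 Bᵀ` puts the `B` term in the same congruence form as the others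
  set I : Matrix (Fin m) (Fin m) ℝ := 1 with hI_def
  have hI : I.PosSemidef := PosSemidef.one
  have hW_eq : W = A * W * Aᵀ + ∑ j, F j * W * (F j)ᵀ + B * I * Bᵀ := by
    rw [hI_def, Matrix.mul_one, eq_comm, ← sub_eq_zero, ← hLyap]; abel
  have hq_split : q (A * W * Aᵀ) + ∑ j, q (F j * W * (F j)ᵀ) + q (B * I * Bᵀ) = 0 := by
    have hqW : q W = 0 := by simp [q, hv]
    rw [hW_eq] at hqW
    simpa only [q, add_mulVec, sum_mulVec, dotProduct_add, dotProduct_sum] using hqW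
  have hA : 0 ≤ q (A * W * Aᵀ) := hW.dotProduct_mulVec_mul_mul_transpose_nonneg A v
  have hF (j) : 0 ≤ q (F j * W * (F j)ᵀ) := hW.dotProduct_mulVec_mul_mul_transpose_nonneg (F j) v
  have hB : 0 ≤ q (B * I * Bᵀ) := hI.dotProduct_mulVec_mul_mul_transpose_nonneg B v
  have hFsum : 0 ≤ ∑ j, q (F j * W * (F j)ᵀ) := Finset.sum_nonneg fun j _ => hF j
  refine ⟨(hW.dotProduct_mulVec_mul_mul_transpose_eq_zero_iff A v).mp (by linarith),
    fun j => (hW.dotProduct_mulVec_mul_mul_transpose_eq_zero_iff (F j) v).mp ?_, ?_⟩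
  · exact (Finset.sum_eq_zero_iff_of_nonneg fun j _ => hF j).mp (by linarith) j
      (Finset.mem_univ j)
  · simpa [I] using (hI.dotProduct_mulVec_mul_mul_transpose_eq_zero_iff B v).mp (by linarith)
end

section
/- Let W be a symmetric positive semidefinite matrix satisfying the generalized Lyapunov equation A W Aᵀ − W + Σ_{j=1}^m F_j W F_jᵀ + B Bᵀ = 0. Then the image (column space) of W is invariant under the bilinear dynamics: if x ∈ Im(W) and u ∈ ℝ^m, then A x + Σ_{j=1}^m (F_j x + B_j) u_j ∈ Im(W), where B_j is the j-th column of B. -/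
/-!
For `z ∈ ker W`, pairing the Lyapunov equation with `z` writes `0 = zᴴ W z` as the sum of the
nonnegative terms `zᴴ A W Aᴴ z`, `zᴴ F_j W F_jᴴ z` and `‖Bᴴ z‖²`, so all of them vanish; since `W`
is positive semidefinite this gives `Aᴴ z, F_jᴴ z ∈ ker W` and `Bᴴ z = 0`. Hence `ker W` is
invariant under `Aᴴ` and the `F_jᴴ` and orthogonal to the columns of `B`, and dually
`Im W = (ker W)ᗮ` is invariant under `A` and the `F_j` and contains the columns `B_j`.
-/
open Matrix
open scoped ComplexOrder
namespace Matrix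

variable {𝕜 ι κ : Type*} [RCLike 𝕜] [Fintype ι]

theorem IsHermitian.mem_range_mulVecLin_iff [DecidableEq ι] {W : Matrix ι ι 𝕜}
    (hW : W.IsHermitian) {v : ι → 𝕜} :
    v ∈ LinearMap.range W.mulVecLin ↔ ∀ z, W *ᵥ z = 0 → star z ⬝ᵥ v = 0 := by
  have hrange : LinearMap.range W.toEuclideanLin = (LinearMap.ker W.toEuclideanLin)ᗮ := by
    rw [← (isSymmetric_toEuclideanLin_iff.mpr hW).orthogonal_range,
      Submodule.orthogonal_orthogonal]
  have hmem : v ∈ LinearMap.range W.mulVecLin ↔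
      WithLp.toLp 2 v ∈ LinearMap.range W.toEuclideanLin := by
    simp only [LinearMap.mem_range, toLpLin_apply, mulVecLin_apply]
    exact ⟨fun ⟨y, hy⟩ => ⟨WithLp.toLp 2 y, by simp [hy]⟩,
      fun ⟨y, hy⟩ => ⟨y.ofLp, congrArg WithLp.ofLp hy⟩⟩
  rw [hmem, hrange, Submodule.mem_orthogonal]
  simp only [LinearMap.mem_ker, EuclideanSpace.inner_eq_star_dotProduct, toLpLin_apply]
  refine ⟨fun h z hz => ?_, fun h u hu => ?_⟩
  · rw [dotProduct_comm]; exact h (WithLp.toLp 2 z) (by simp [hz])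
  · rw [dotProduct_comm]; exact h u.ofLp (by simpa using hu)

theorem star_dotProduct_mulVec_conjTranspose (M : Matrix ι ι 𝕜) (z v : ι → 𝕜) :
    star z ⬝ᵥ M *ᵥ v = star (Mᴴ *ᵥ z) ⬝ᵥ v := by
  rw [dotProduct_mulVec, star_mulVec, conjTranspose_conjTranspose]

theorem IsHermitian.mulVec_mem_range_mulVecLin [DecidableEq ι] {W M : Matrix ι ι 𝕜}
    (hW : W.IsHermitian) (hM : ∀ z, W *ᵥ z = 0 → W *ᵥ (Mᴴ *ᵥ z) = 0) {x : ι → 𝕜}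
    (hx : x ∈ LinearMap.range W.mulVecLin) : M *ᵥ x ∈ LinearMap.range W.mulVecLin := by
  obtain ⟨y, rfl⟩ := hx
  refine hW.mem_range_mulVecLin_iff.mpr fun z hz => ?_
  rw [mulVecLin_apply, star_dotProduct_mulVec_conjTranspose,
    star_dotProduct_mulVec_conjTranspose, hW.eq, hM z hz, star_zero, zero_dotProduct]

theorem IsHermitian.col_mem_range_mulVecLin [DecidableEq ι] {W : Matrix ι ι 𝕜}
    {B : Matrix ι κ 𝕜} (hW : W.IsHermitian) (hB : ∀ z, W *ᵥ z = 0 → Bᴴ *ᵥ z = 0)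
    (j : κ) : (fun i => B i j) ∈ LinearMap.range W.mulVecLin := by
  refine hW.mem_range_mulVecLin_iff.mpr fun z hz => ?_
  have h := congrArg star (congrFun (hB z hz) j)
  simpa [mulVec, dotProduct, mul_comm] using h

theorem PosSemidef.mulVec_eq_zero_of_add {P Q : Matrix ι ι 𝕜} (hP : P.PosSemidef)
    (hQ : Q.PosSemidef) {z : ι → 𝕜} (h : (P + Q) *ᵥ z = 0) :
    P *ᵥ z = 0 ∧ Q *ᵥ z = 0 := by
  have hsum : star z ⬝ᵥ P *ᵥ z + star z ⬝ᵥ Q *ᵥ z = 0 := by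
    rw [← dotProduct_add, ← add_mulVec, h, dotProduct_zero]
  obtain ⟨hPz, hQz⟩ := (add_eq_zero_iff_of_nonneg (hP.dotProduct_mulVec_nonneg z)
    (hQ.dotProduct_mulVec_nonneg z)).mp hsum
  exact ⟨(hP.dotProduct_mulVec_zero_iff z).mp hPz, (hQ.dotProduct_mulVec_zero_iff z).mp hQz⟩

theorem PosSemidef.mulVec_eq_zero_of_sum {s : Finset κ} {P : κ → Matrix ι ι 𝕜}
    (hP : ∀ j ∈ s, (P j).PosSemidef) {z : ι → 𝕜} (h : (∑ j ∈ s, P j) *ᵥ z = 0) :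
    ∀ j ∈ s, P j *ᵥ z = 0 := by
  have hsum : ∑ j ∈ s, star z ⬝ᵥ P j *ᵥ z = 0 := by
    rw [← dotProduct_sum, ← sum_mulVec, h, dotProduct_zero]
  intro j hj
  exact ((hP j hj).dotProduct_mulVec_zero_iff z).mp <|
    (Finset.sum_eq_zero_iff_of_nonneg fun j hj => (hP j hj).dotProduct_mulVec_nonneg z).mp
      hsum j hj

theorem PosSemidef.mul_mul_conjTranspose_mulVec_eq_zero_iff {W : Matrix ι ι 𝕜}
    (hW : W.PosSemidef) (M : Matrix ι ι 𝕜) (z : ι → 𝕜) :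
    (M * W * Mᴴ) *ᵥ z = 0 ↔ W *ᵥ (Mᴴ *ᵥ z) = 0 := by
  refine ⟨fun h => (hW.dotProduct_mulVec_zero_iff _).mp ?_, fun h => ?_⟩
  · rw [← star_dotProduct_mulVec_conjTranspose, mulVec_mulVec, mulVec_mulVec, h,
      dotProduct_zero]
  · rw [← mulVec_mulVec, ← mulVec_mulVec, h, mulVec_zero]

theorem PosSemidef.ker_invariant_of_lyapunov {ν : Type*} [Fintype κ] [Fintype ν]
    {A W : Matrix ι ι 𝕜} {F : κ → Matrix ι ι 𝕜} {B : Matrix ι ν 𝕜} (hW : W.PosSemidef)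
    (hLyap : A * W * Aᴴ + ∑ j, F j * W * (F j)ᴴ + B * Bᴴ = W) {z : ι → 𝕜} (hz : W *ᵥ z = 0) :
    W *ᵥ (Aᴴ *ᵥ z) = 0 ∧ (∀ j, W *ᵥ ((F j)ᴴ *ᵥ z) = 0) ∧ Bᴴ *ᵥ z = 0 := by
  rw [← hLyap] at hz
  have hA := hW.mul_mul_conjTranspose_same A
  have hF : ∀ j ∈ Finset.univ, (F j * W * (F j)ᴴ).PosSemidef :=
    fun j _ => hW.mul_mul_conjTranspose_same (F j)
  obtain ⟨hAFz, hBz⟩ := (hA.add (posSemidef_sum _ hF)).mulVec_eq_zero_of_add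
    (posSemidef_self_mul_conjTranspose B) hz
  obtain ⟨hAz, hFz⟩ := hA.mulVec_eq_zero_of_add (posSemidef_sum _ hF) hAFz
  exact ⟨(hW.mul_mul_conjTranspose_mulVec_eq_zero_iff A z).mp hAz,
    fun j => (hW.mul_mul_conjTranspose_mulVec_eq_zero_iff (F j) z).mp
      (PosSemidef.mulVec_eq_zero_of_sum hF hFz j (Finset.mem_univ j)),
    (self_mul_conjTranspose_mulVec_eq_zero B z).mp hBz⟩

end Matrix

/-- If the symmetric PSD matrix `W` solves the generalized Lyapunov equation,
then the image (column space) of `W` is invariant under the bilinear dynamics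
`x ↦ A x + Σ_j (F_j x + B_j) u_j`, where `B_j = Bᵀ j` is the `j`-th column of `B`. -/
theorem stmt_2 {n m : ℕ}
    (A : Matrix (Fin n) (Fin n) ℝ) (F : Fin m → Matrix (Fin n) (Fin n) ℝ)
    (B : Matrix (Fin n) (Fin m) ℝ) (W : Matrix (Fin n) (Fin n) ℝ)
    (hW : W.PosSemidef)
    (hLyap : A * W * Aᵀ - W + (∑ j, F j * W * (F j)ᵀ) + B * Bᵀ = 0)
    (x : Fin n → ℝ) (hx : x ∈ Set.range W.mulVec) (u : Fin m → ℝ) :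
    A.mulVec x + ∑ j, u j • ((F j).mulVec x + Bᵀ j) ∈ Set.range W.mulVec := by
  have hLyap' : A * W * Aᴴ + ∑ j, F j * W * (F j)ᴴ + B * Bᴴ = W := by
    simp only [conjTranspose_eq_transpose_of_trivial]
    rw [← sub_eq_zero, ← hLyap]
    abel
  have hker := fun z (hz : W *ᵥ z = 0) => hW.ker_invariant_of_lyapunov hLyap' hz
  change _ ∈ LinearMap.range W.mulVecLin at hx ⊢
  refine add_mem (hW.isHermitian.mulVec_mem_range_mulVecLin (fun z hz => (hker z hz).1) hx) <|
    sum_mem fun j _ => Submodule.smul_mem _ _ <| add_mem ?_ ?_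
  · exact hW.isHermitian.mulVec_mem_range_mulVecLin (fun z hz => (hker z hz).2.1 j) hx
  · exact hW.isHermitian.col_mem_range_mulVecLin (fun z hz => (hker z hz).2.2) j
end

section
/- Consider a bilinear system with symmetric positive semidefinite Gramian W satisfying the generalized Lyapunov equation. If the state trajectory satisfies x(0) = 0 and x(k+1) = A x(k) + Σ_{j=1}^m (F_j x(k) + B_j) u_j(k) for all k, then x(k) ∈ Im(W) for every k ≥ 0. In particular, any state reachable from the origin lies in Im(W). -/
/-!
Testing the Lyapunov equation against `v ∈ ker W` writes `0 = vᵀ W v` as the sum of the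
nonnegative terms `(Aᵀv)ᵀ W (Aᵀv)`, `(F_jᵀv)ᵀ W (F_jᵀv)` and `‖Bᵀv‖²`. Hence `ker W` is invariant
under `Aᵀ` and every `F_jᵀ` and is annihilated by `Bᵀ`, so by induction the trajectory stays
orthogonal to `ker W`, which for symmetric `W` is `Im W`.
-/

open Matrix

variable {ι κ : Type*} [Fintype ι]

theorem Matrix.IsHermitian.mem_range_mulVec_iff {𝕜 : Type*} [RCLike 𝕜] [DecidableEq ι]
    {W : Matrix ι ι 𝕜} (hW : W.IsHermitian) {x : ι → 𝕜} :
    x ∈ Set.range W.mulVec ↔ ∀ v, W *ᵥ v = 0 → x ⬝ᵥ star v = 0 := by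
  have hrange : LinearMap.range W.toEuclideanLin = (LinearMap.ker W.toEuclideanLin)ᗮ := by
    rw [← (isSymmetric_toEuclideanLin_iff.mpr hW).orthogonal_range,
      Submodule.orthogonal_orthogonal]
  have hx := congrArg (WithLp.toLp 2 x ∈ ·) hrange
  simp only [LinearMap.mem_range, Submodule.mem_orthogonal, LinearMap.mem_ker,
    EuclideanSpace.inner_eq_star_dotProduct, eq_iff_iff, toLpLin_apply,
    (WithLp.toLp_injective 2).eq_iff, WithLp.ofLp_zero] at hx
  have hs : Function.Surjective (WithLp.ofLp : EuclideanSpace 𝕜 ι → ι → 𝕜) :=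
    WithLp.ofLp_surjective 2
  exact hs.exists.trans (hx.trans (hs.forall (p := fun v => W *ᵥ v = 0 → x ⬝ᵥ star v = 0)).symm)

theorem dotProduct_mul_mul_transpose_mulVec {R : Type*} [CommSemiring R] [Fintype κ]
    (M : Matrix ι κ R) (W : Matrix κ κ R) (v : ι → R) :
    v ⬝ᵥ (M * W * Mᵀ) *ᵥ v = (Mᵀ *ᵥ v) ⬝ᵥ W *ᵥ (Mᵀ *ᵥ v) := by
  rw [← mulVec_mulVec, ← mulVec_mulVec, dotProduct_mulVec, ← mulVec_transpose]

theorem dotProduct_mul_transpose_mulVec {R : Type*} [CommSemiring R] [Fintype κ]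
    (M : Matrix ι κ R) (v : ι → R) : v ⬝ᵥ (M * Mᵀ) *ᵥ v = (Mᵀ *ᵥ v) ⬝ᵥ (Mᵀ *ᵥ v) := by
  rw [← mulVec_mulVec, dotProduct_mulVec, ← mulVec_transpose]

namespace Matrix.PosSemidef

variable {W : Matrix ι ι ℝ}

theorem dotProduct_mulVec_self_nonneg (hW : W.PosSemidef) (v : ι → ℝ) : 0 ≤ v ⬝ᵥ W *ᵥ v := by
  simpa using hW.dotProduct_mulVec_nonneg v

theorem mulVec_eq_zero_of_dotProduct_mulVec_self (hW : W.PosSemidef) {v : ι → ℝ}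
    (hv : v ⬝ᵥ W *ᵥ v = 0) : W *ᵥ v = 0 :=
  (hW.dotProduct_mulVec_zero_iff v).mp (by simpa using hv)

theorem ker_invariant_of_lyapunov_s3 {κ' : Type*} [Fintype κ] [Fintype κ'] {A : Matrix ι ι ℝ}
    {F : κ → Matrix ι ι ℝ} {B : Matrix ι κ' ℝ} (hW : W.PosSemidef)
    (hLyap : A * W * Aᵀ - W + ∑ j, F j * W * (F j)ᵀ + B * Bᵀ = 0) {v : ι → ℝ}
    (hv : W *ᵥ v = 0) :
    W *ᵥ (Aᵀ *ᵥ v) = 0 ∧ (∀ j, W *ᵥ ((F j)ᵀ *ᵥ v) = 0) ∧ Bᵀ *ᵥ v = 0 := by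
  have hsum : (Aᵀ *ᵥ v) ⬝ᵥ W *ᵥ (Aᵀ *ᵥ v) + ∑ j, ((F j)ᵀ *ᵥ v) ⬝ᵥ W *ᵥ ((F j)ᵀ *ᵥ v)
      + (Bᵀ *ᵥ v) ⬝ᵥ (Bᵀ *ᵥ v) = 0 := by
    have hW' : A * W * Aᵀ + ∑ j, F j * W * (F j)ᵀ + B * Bᵀ = W := by
      rw [← sub_eq_zero, ← hLyap]; abel
    simpa only [add_mulVec, dotProduct_add, sum_mulVec, dotProduct_sum, hv, dotProduct_zero,
      dotProduct_mul_mul_transpose_mulVec, dotProduct_mul_transpose_mulVec]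
      using congrArg (fun M => v ⬝ᵥ M *ᵥ v) hW'
  have hF := Finset.sum_nonneg fun j (_ : j ∈ Finset.univ) =>
    hW.dotProduct_mulVec_self_nonneg ((F j)ᵀ *ᵥ v)
  obtain ⟨hAF0, hB0⟩ := (add_eq_zero_iff_of_nonneg
    (add_nonneg (hW.dotProduct_mulVec_self_nonneg _) hF)
    (by simpa using dotProduct_self_star_nonneg (Bᵀ *ᵥ v))).mp hsum
  obtain ⟨hA0, hF0⟩ := (add_eq_zero_iff_of_nonneg (hW.dotProduct_mulVec_self_nonneg _) hF).mp hAF0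
  refine ⟨hW.mulVec_eq_zero_of_dotProduct_mulVec_self hA0, fun j => ?_,
    dotProduct_self_eq_zero.mp hB0⟩
  exact hW.mulVec_eq_zero_of_dotProduct_mulVec_self <|
    (Finset.sum_eq_zero_iff_of_nonneg fun j _ => hW.dotProduct_mulVec_self_nonneg _).mp hF0 j
      (Finset.mem_univ j)

end Matrix.PosSemidef

theorem dotProduct_eq_zero_of_bilinear_dynamics {R : Type*} [CommRing R] [Fintype κ]
    {A : Matrix ι ι R} {F : κ → Matrix ι ι R} {B : Matrix ι κ R} {K : Set (ι → R)}
    (hA : ∀ v ∈ K, Aᵀ *ᵥ v ∈ K) (hF : ∀ j, ∀ v ∈ K, (F j)ᵀ *ᵥ v ∈ K)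
    (hB : ∀ v ∈ K, Bᵀ *ᵥ v = 0) {x : ℕ → ι → R} {u : ℕ → κ → R} (hx0 : x 0 = 0)
    (hdyn : ∀ k, x (k + 1) = A *ᵥ x k + ∑ j, u k j • (F j *ᵥ x k + Bᵀ j)) (k : ℕ) :
    ∀ v ∈ K, x k ⬝ᵥ v = 0 := by
  induction k with
  | zero => simp [hx0]
  | succ k ih =>
    intro v hv
    have hAx : A *ᵥ x k ⬝ᵥ v = 0 := by
      rw [dotProduct_comm, ← dotProduct_transpose_mulVec]; exact ih _ (hA v hv)
    have hFx (j : κ) : F j *ᵥ x k ⬝ᵥ v = 0 := by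
      rw [dotProduct_comm, ← dotProduct_transpose_mulVec]; exact ih _ (hF j v hv)
    have hBj (j : κ) : Bᵀ j ⬝ᵥ v = 0 := congrFun (hB v hv) j
    simp [hdyn, add_dotProduct, sum_dotProduct, hAx, hFx, hBj]

/-- For a bilinear system whose symmetric PSD Gramian `W` satisfies the
generalized Lyapunov equation, every trajectory starting from the origin stays in the
image of `W`; in particular any state reachable from the origin lies in `Im(W)`. -/
theorem stmt_3 {n m : ℕ}
    (A : Matrix (Fin n) (Fin n) ℝ) (F : Fin m → Matrix (Fin n) (Fin n) ℝ)
    (B : Matrix (Fin n) (Fin m) ℝ) (W : Matrix (Fin n) (Fin n) ℝ)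
    (hW : W.PosSemidef)
    (hLyap : A * W * Aᵀ - W + (∑ j, F j * W * (F j)ᵀ) + B * Bᵀ = 0)
    (x : ℕ → Fin n → ℝ) (u : ℕ → Fin m → ℝ)
    (hx0 : x 0 = 0)
    (hdyn : ∀ k, x (k + 1) = A.mulVec (x k) + ∑ j, u k j • ((F j).mulVec (x k) + Bᵀ j)) :
    ∀ k, x k ∈ Set.range W.mulVec := by
  have hker {v} (hv : v ∈ {v | W *ᵥ v = 0}) := hW.ker_invariant_of_lyapunov_s3 hLyap hv
  intro k
  rw [hW.isHermitian.mem_range_mulVec_iff]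
  intro v hv
  simpa using dotProduct_eq_zero_of_bilinear_dynamics (fun v hv => (hker hv).1)
    (fun j v hv => (hker hv).2.1 j) (fun v hv => (hker hv).2.2) hx0 hdyn k v hv
end

section
/- Let V be a finite actuator set and suppose that for each S ⊆ V the bilinear reachability Gramian W(S) = Σ_{i=1}^∞ W_i(S) converges, where W₁(S) = Σ_{s∈S} W₁(s) and W_i(S) = Σ_{k=0}^∞ Aᵏ (Σ_{j∈S} F_j W_{i−1}(S) F_jᵀ) (Aᵀ)ᵏ for i ≥ 2. Then W is a supermodular matrix-valued set function with respect to the Loewner order: for all S₁ ⊆ S₂ ⊆ V and s ∈ V ∖ S₂, W(S₂ ∪ {s}) − W(S₂) ⪰ W(S₁ ∪ {s}) − W(S₁). -/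
/-!
Write `Φ_S(X) = ∑_{j ∈ S} F_j X F_jᵀ`, so that `W_{i+1}(S) = ∑_k Aᵏ Φ_S(W_i(S)) (Aᵀ)ᵏ`.
By induction on `i`, every `W_i` is Loewner-nonnegative, monotone and supermodular as a set
function: `W₁` is modular with nonnegative increments, and for `t ∉ T` the increment
`Φ_{T+t}(X(T+t)) - Φ_T(X(T)) = F_t X(T+t) F_tᵀ + ∑_{j ∈ T} F_j (X(T+t) - X(T)) F_jᵀ`
grows with `T` as soon as `X` is monotone and supermodular. Congruences `M ↦ C M Cᵀ` and
convergent series preserve all three properties, and summing over `i` gives the theorem.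
-/

open Matrix
open scoped MatrixOrder ComplexOrder

namespace Matrix

variable {𝕜 m : Type*} [RCLike 𝕜] [Fintype m]

theorem isClosed_setOf_posSemidef : IsClosed {M : Matrix m m 𝕜 | M.PosSemidef} := by
  simp only [posSemidef_iff_dotProduct_mulVec, Set.ofPred_and, Set.ofPred_forall]
  exact .inter (isClosed_eq (by fun_prop) continuous_id)
    (isClosed_iInter fun x => isClosed_Ici.preimage (by fun_prop))

instance : OrderClosedTopology (Matrix m m 𝕜) where
  isClosed_le' := isClosed_le_of_isClosed_nonneg <| by
    simpa only [nonneg_iff_posSemidef] using isClosed_setOf_posSemidef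

end Matrix

section Supermodular

variable {V M : Type*}

def Supermodular [DecidableEq V] [AddGroup M] [LE M] (f : Finset V → M) : Prop :=
  ∀ ⦃S T : Finset V⦄, S ⊆ T → ∀ ⦃t : V⦄, t ∉ T →
    f (insert t S) - f S ≤ f (insert t T) - f T

theorem supermodular_sum [DecidableEq V] [AddCommGroup M] [Preorder M] (c : V → M) :
    Supermodular fun S : Finset V => ∑ s ∈ S, c s := by
  intro S T hST t ht
  dsimp only
  rw [Finset.sum_insert ht, Finset.sum_insert fun h => ht (hST h), add_sub_cancel_right,
    add_sub_cancel_right]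

section OrderedGroup

variable [AddCommGroup M] [PartialOrder M] [IsOrderedAddMonoid M] [TopologicalSpace M]
  [OrderClosedTopology M]

theorem Monotone.tsum {f : ℕ → Finset V → M} (hf : ∀ k, Monotone (f k))
    (hsum : ∀ S, Summable fun k => f k S) : Monotone fun S => ∑' k, f k S :=
  fun S T hST => (hsum S).tsum_le_tsum (fun k => hf k hST) (hsum T)

theorem Supermodular.tsum [DecidableEq V] [IsTopologicalAddGroup M] [T2Space M]
    {f : ℕ → Finset V → M} (hf : ∀ k, Supermodular (f k))
    (hsum : ∀ S, Summable fun k => f k S) : Supermodular fun S => ∑' k, f k S := by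
  intro S T hST t ht
  simp only [← (hsum _).tsum_sub (hsum _)]
  exact ((hsum _).sub (hsum _)).tsum_le_tsum (fun k => hf k hST ht) ((hsum _).sub (hsum _))

end OrderedGroup

section StarOrderedRing

variable [Ring M] [StarRing M]

theorem sum_conj_insert_sub [DecidableEq V] (F : V → M) (g : Finset V → M) {T : Finset V}
    {t : V} (ht : t ∉ T) :
    ∑ j ∈ insert t T, F j * g (insert t T) * star (F j) - ∑ j ∈ T, F j * g T * star (F j) =
      F t * g (insert t T) * star (F t) +
        ∑ j ∈ T, F j * (g (insert t T) - g T) * star (F j) := by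
  rw [Finset.sum_insert ht, add_sub_assoc, ← Finset.sum_sub_distrib]
  simp only [mul_sub, sub_mul]

variable [PartialOrder M] [StarOrderedRing M]

theorem Monotone.conj {f : Finset V → M} (hf : Monotone f) (c : M) :
    Monotone fun S => c * f S * star c :=
  fun _ _ hST => star_right_conjugate_le_conjugate (hf hST) c

theorem Supermodular.conj [DecidableEq V] {f : Finset V → M} (hf : Supermodular f) (c : M) :
    Supermodular fun S => c * f S * star c := by
  intro S T hST t ht
  simp only [← mul_sub, ← sub_mul]
  exact star_right_conjugate_le_conjugate (hf hST ht) c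

variable (F : V → M) {g : Finset V → M}

theorem monotone_sum_conj (hg₀ : 0 ≤ g) (hg : Monotone g) :
    Monotone fun S => ∑ j ∈ S, F j * g S * star (F j) := by
  intro S T hST
  calc ∑ j ∈ S, F j * g S * star (F j)
      ≤ ∑ j ∈ S, F j * g T * star (F j) :=
        Finset.sum_le_sum fun j _ => star_right_conjugate_le_conjugate (hg hST) (F j)
    _ ≤ ∑ j ∈ T, F j * g T * star (F j) :=
        Finset.sum_le_sum_of_subset_of_nonneg hST fun j _ _ =>
          star_right_conjugate_nonneg (hg₀ T) (F j)

theorem supermodular_sum_conj [DecidableEq V] (hg : Monotone g) (hg' : Supermodular g) :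
    Supermodular fun S => ∑ j ∈ S, F j * g S * star (F j) := by
  intro S T hST t ht
  rw [sum_conj_insert_sub F g (fun h => ht (hST h)), sum_conj_insert_sub F g ht]
  gcongr ?_ + ?_
  · exact star_right_conjugate_le_conjugate (hg (Finset.insert_subset_insert t hST)) (F t)
  · calc ∑ j ∈ S, F j * (g (insert t S) - g S) * star (F j)
        ≤ ∑ j ∈ S, F j * (g (insert t T) - g T) * star (F j) :=
          Finset.sum_le_sum fun j _ => star_right_conjugate_le_conjugate (hg' hST ht) (F j)
      _ ≤ ∑ j ∈ T, F j * (g (insert t T) - g T) * star (F j) :=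
          Finset.sum_le_sum_of_subset_of_nonneg hST fun j _ _ =>
            star_right_conjugate_nonneg (sub_nonneg.mpr (hg (Finset.subset_insert t T))) (F j)

end StarOrderedRing

end Supermodular

theorem stmt_11_general {n : ℕ} {V : Type*} [DecidableEq V]
    (A : Matrix (Fin n) (Fin n) ℝ)
    (F : V → Matrix (Fin n) (Fin n) ℝ) (b : V → Fin n → ℝ)
    (Wseq : ℕ → Finset V → Matrix (Fin n) (Fin n) ℝ)
    (hWseq1 : ∀ S, Wseq 1 S = ∑ s ∈ S, ∑' k : ℕ, A ^ k * vecMulVec (b s) (b s) * Aᵀ ^ k)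
    (hWseqi : ∀ i, 2 ≤ i → ∀ S, Wseq i S =
      ∑' k : ℕ, A ^ k * (∑ j ∈ S, F j * Wseq (i - 1) S * (F j)ᵀ) * Aᵀ ^ k)
    (hconvi : ∀ i : ℕ, ∀ S : Finset V,
      Summable (fun k : ℕ => A ^ k * (∑ j ∈ S, F j * Wseq i S * (F j)ᵀ) * Aᵀ ^ k))
    (hconv : ∀ S : Finset V, Summable (fun i : ℕ => Wseq (i + 1) S))
    (W : Finset V → Matrix (Fin n) (Fin n) ℝ)
    (hW : ∀ S, W S = ∑' i : ℕ, Wseq (i + 1) S)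
    (S1 S2 : Finset V) (s : V) (h12 : S1 ⊆ S2) (hs : s ∉ S2) :
    ((W (insert s S2) - W S2) - (W (insert s S1) - W S1)).PosSemidef := by
  have htranspose (M : Matrix (Fin n) (Fin n) ℝ) : Mᵀ = star M := by
    rw [star_eq_conjTranspose, conjTranspose_eq_transpose_of_trivial]
  simp only [htranspose, ← star_pow] at hWseq1 hWseqi hconvi
  have hgram : 0 ≤ fun s => ∑' k, A ^ k * vecMulVec (b s) (b s) * star (A ^ k) := fun s =>
    tsum_nonneg fun k => star_right_conjugate_nonneg
      (by simpa only [star_trivial] using (posSemidef_vecMulVec_self_star (b s)).nonneg) _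
  have hlevel (i : ℕ) :
      0 ≤ Wseq (i + 1) ∧ Monotone (Wseq (i + 1)) ∧ Supermodular (Wseq (i + 1)) := by
    induction i with
    | zero =>
      rw [funext hWseq1]
      exact ⟨fun S => Finset.sum_nonneg fun s _ => hgram s, Finset.sum_mono_set_of_nonneg hgram,
        supermodular_sum _⟩
    | succ i ih =>
      obtain ⟨hnonneg, hmono, hsuper⟩ := ih
      rw [funext (hWseqi (i + 2) (by omega))]
      exact ⟨fun S => tsum_nonneg fun k => star_right_conjugate_nonneg
          (Finset.sum_nonneg fun j _ => star_right_conjugate_nonneg (hnonneg S) _) _,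
        Monotone.tsum (fun k => (monotone_sum_conj F hnonneg hmono).conj _) (hconvi (i + 1)),
        Supermodular.tsum (fun k => (supermodular_sum_conj F hmono hsuper).conj _)
          (hconvi (i + 1))⟩
  obtain rfl : W = fun S => ∑' i, Wseq (i + 1) S := funext hW
  exact Supermodular.tsum (fun i => (hlevel i).2.2) hconv h12 hs

/-- The bilinear reachability Gramian `W(S) = Σ_{i≥1} W_i(S)`, where
`W₁(S) = Σ_{s∈S} Σ_k Aᵏ b_s b_sᵀ (Aᵀ)ᵏ` and
`W_i(S) = Σ_k Aᵏ (Σ_{j∈S} F_j W_{i−1}(S) F_jᵀ) (Aᵀ)ᵏ` for `i ≥ 2`, is supermodular with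
respect to the Loewner order: for `S₁ ⊆ S₂` and `s ∉ S₂`,
`W(S₂ ∪ {s}) − W(S₂) ⪰ W(S₁ ∪ {s}) − W(S₁)`. -/
theorem stmt_11 {n : ℕ} {V : Type*} [Fintype V] [DecidableEq V]
    (A : Matrix (Fin n) (Fin n) ℝ)
    (hA : ∀ μ ∈ spectrum ℂ (A.map (algebraMap ℝ ℂ)), ‖μ‖ < 1)
    (F : V → Matrix (Fin n) (Fin n) ℝ) (b : V → Fin n → ℝ)
    (Wseq : ℕ → Finset V → Matrix (Fin n) (Fin n) ℝ)
    (hWseq1 : ∀ S, Wseq 1 S = ∑ s ∈ S, ∑' k : ℕ, A ^ k * vecMulVec (b s) (b s) * Aᵀ ^ k)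
    (hWseqi : ∀ i, 2 ≤ i → ∀ S, Wseq i S =
      ∑' k : ℕ, A ^ k * (∑ j ∈ S, F j * Wseq (i - 1) S * (F j)ᵀ) * Aᵀ ^ k)
    (hconv1 : ∀ S : Finset V, ∀ s ∈ S,
      Summable (fun k : ℕ => A ^ k * vecMulVec (b s) (b s) * Aᵀ ^ k))
    (hconvi : ∀ i : ℕ, ∀ S : Finset V,
      Summable (fun k : ℕ => A ^ k * (∑ j ∈ S, F j * Wseq i S * (F j)ᵀ) * Aᵀ ^ k))
    (hconv : ∀ S : Finset V, Summable (fun i : ℕ => Wseq (i + 1) S))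
    (W : Finset V → Matrix (Fin n) (Fin n) ℝ)
    (hW : ∀ S, W S = ∑' i : ℕ, Wseq (i + 1) S)
    (S1 S2 : Finset V) (s : V) (h12 : S1 ⊆ S2) (hs : s ∉ S2) :
    ((W (insert s S2) - W S2) - (W (insert s S1) - W S1)).PosSemidef :=
  stmt_11_general A F b Wseq hWseq1 hWseqi hconvi hconv W hW S1 S2 s h12 hs
end
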